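/- arXiv:1801.02541 — 6 statements merged into one kernel-verified Lean document; each statement's English description precedes it below -/
import Mathlib

section
/- Under the equal turnout hypothesis, the efficiency gap satisfies EG = S_m - 2·V_m, where S_m = S^A/n - 1/2 is party A's marginal seat share and V_m = V^A/V - 1/2 is party A's marginal vote share. -/
/-!
With district total `t = V / n`, in each district `W^B - W^A = t / 2 - 2 V_i^A + t [A wins i]`,
whichever party wins. Summing over the districts and using `n t = V` gives
`W^B - W^A = V / 2 - 2 V^A + S^A V / n`, which is `(S_m - 2 V_m) V`.
-/

open Finset

/-- Votes wasted by a party with `v` votes against `w` in a district of total turnout `t`. -/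
noncomputable def wastedVotes (v w t : ℝ) : ℝ :=
  if w < v then v - t / 2 else v

lemma wastedVotes_sub_wastedVotes {a b t : ℝ} (hab : a + b = t) (hne : a ≠ b) :
    wastedVotes b a t - wastedVotes a b t = t / 2 - 2 * a + if b < a then t else 0 := by
  unfold wastedVotes
  rcases hne.lt_or_gt with h | h <;>
    simp only [h, if_true, not_lt.mpr h.le, if_false] <;> linarith

lemma sum_wastedVotes_sub_sum_wastedVotes {ι : Type*} [Fintype ι] {a b : ι → ℝ} {t : ℝ}
    (hab : ∀ i, a i + b i = t) (hne : ∀ i, a i ≠ b i) :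
    ∑ i, wastedVotes (b i) (a i) t - ∑ i, wastedVotes (a i) (b i) t
      = Fintype.card ι * t / 2 + #{i | b i < a i} * t - 2 * ∑ i, a i := by
  rw [← sum_sub_distrib, sum_congr rfl fun i _ => wastedVotes_sub_wastedVotes (hab i) (hne i),
    sum_add_distrib, sum_sub_distrib, sum_const, ← mul_sum, sum_ite, sum_const_zero, sum_const,
    card_univ]
  simp only [nsmul_eq_mul, add_zero]
  ring

theorem efficiency_gap_formula_general
    (n : ℕ) (hn : 0 < n) (V : ℝ) (hV : 0 < V)
    (VA VB : Fin n → ℝ)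
    (hturnout : ∀ i, VA i + VB i = V / n)
    (hnotie : ∀ i, VA i ≠ VB i) :
    let WA : ℝ := ∑ i, (if VB i < VA i then VA i - V / n / 2 else VA i)
    let WB : ℝ := ∑ i, (if VA i < VB i then VB i - V / n / 2 else VB i)
    let Sm : ℝ := ((Finset.univ.filter fun i => VB i < VA i).card : ℝ) / n - 1 / 2
    let Vm : ℝ := (∑ i, VA i) / V - 1 / 2
    (WB - WA) / V = Sm - 2 * Vm := by
  intro WA WB Sm Vm
  have hWB_sub_WA : WB - WA = n * (V / n) / 2 + #{i | VB i < VA i} * (V / n) - 2 * ∑ i, VA i := by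
    have h := sum_wastedVotes_sub_sum_wastedVotes hturnout hnotie
    rw [Fintype.card_fin] at h
    exact h
  have hn' : (n : ℝ) ≠ 0 := by positivity
  simp only [hWB_sub_WA, Sm, Vm]
  field_simp
  ring

/-- Under the equal turnout hypothesis, the efficiency gap satisfies
`EG = S_m - 2 * V_m`. -/
theorem efficiency_gap_formula
    (n : ℕ) (hn : 0 < n) (V : ℝ) (hV : 0 < V)
    (VA VB : Fin n → ℝ)
    (hnonnegA : ∀ i, 0 ≤ VA i) (hnonnegB : ∀ i, 0 ≤ VB i)
    (hturnout : ∀ i, VA i + VB i = V / n)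
    (hnotie : ∀ i, VA i ≠ VB i) :
    let WA : ℝ := ∑ i, (if VB i < VA i then VA i - V / n / 2 else VA i)
    let WB : ℝ := ∑ i, (if VA i < VB i then VB i - V / n / 2 else VB i)
    let Sm : ℝ := ((Finset.univ.filter fun i => VB i < VA i).card : ℝ) / n - 1 / 2
    let Vm : ℝ := (∑ i, VA i) / V - 1 / 2
    (WB - WA) / V = Sm - 2 * Vm :=
  efficiency_gap_formula_general n hn V hV VA VB hturnout hnotie
end

section
/- If both parties win the same number of seats (S_m = 0), then EG = (1/2)(C^B - C^A), i.e., the efficiency gap is half the difference of average competitiveness of districts won by each party. -/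
/-!
Let `m` be the common number of seats. Each party wastes all its votes except `m` halves of the
district turnout, so `W^B - W^A = ∑ᵢ (V^B_i - V^A_i)`: the total margin in the districts won by `B`
minus that in the districts won by `A`. As `n = 2m`, averaging these margins over `m` districts in units
of the district turnout `V / n` is the same as dividing them by `V / 2`.
-/

open Finset

theorem sum_ite_sub_const {ι M : Type*} [AddCommGroup M] (s : Finset ι) (p : ι → Prop)
    [DecidablePred p] (f : ι → M) (c : M) :
    ∑ i ∈ s, (if p i then f i - c else f i) = ∑ i ∈ s, f i - #(s.filter p) • c := by
  rw [← sum_const, sum_filter, ← sum_sub_distrib]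
  exact sum_congr rfl fun i _ => by split_ifs <;> simp

section NoTies

variable {ι α : Type*} [LinearOrder α] {s : Finset ι} {a b : ι → α}

theorem filter_not_lt_eq_filter_gt (hab : ∀ i, a i ≠ b i) :
    s.filter (fun i => ¬ a i < b i) = s.filter (fun i => b i < a i) :=
  filter_congr fun i _ => by rw [not_lt, (hab i).symm.le_iff_lt]

theorem card_filter_lt_add_card_filter_gt (hab : ∀ i, a i ≠ b i) :
    #(s.filter fun i => a i < b i) + #(s.filter fun i => b i < a i) = #s := by
  rw [← filter_not_lt_eq_filter_gt hab, card_filter_add_card_filter_not]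

theorem sum_sub_eq_sum_abs_sub_sum_abs [AddCommGroup α] [IsOrderedAddMonoid α]
    (hab : ∀ i, a i ≠ b i) :
    ∑ i ∈ s, (b i - a i)
      = ∑ i ∈ s with a i < b i, |a i - b i| - ∑ i ∈ s with b i < a i, |a i - b i| := by
  rw [← sum_filter_add_sum_filter_not s (fun i => a i < b i), filter_not_lt_eq_filter_gt hab,
    sub_eq_add_neg, ← sum_neg_distrib]
  congr 1 <;> refine sum_congr rfl fun i hi => ?_ <;> rw [mem_filter] at hi
  · rw [abs_sub_comm, abs_of_pos (sub_pos.2 hi.2)]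
  · rw [abs_of_pos (sub_pos.2 hi.2), neg_sub]

end NoTies

theorem efficiency_gap_eq_half_competitiveness_gap_general
    (n : ℕ) (V : ℝ)
    (VA VB : Fin n → ℝ)
    (hnotie : ∀ i, VA i ≠ VB i)
    (hSm : (Finset.univ.filter fun i => VB i < VA i).card
         = (Finset.univ.filter fun i => VA i < VB i).card) :
    let WA : ℝ := ∑ i, (if VB i < VA i then VA i - V / n / 2 else VA i)
    let WB : ℝ := ∑ i, (if VA i < VB i then VB i - V / n / 2 else VB i)
    let EG : ℝ := (WB - WA) / V
    let C : Fin n → ℝ := fun i => |VA i - VB i| / (V / n)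
    let CA : ℝ := (∑ i ∈ Finset.univ.filter fun i => VB i < VA i, C i)
                  / ((Finset.univ.filter fun i => VB i < VA i).card : ℝ)
    let CB : ℝ := (∑ i ∈ Finset.univ.filter fun i => VA i < VB i, C i)
                  / ((Finset.univ.filter fun i => VA i < VB i).card : ℝ)
    EG = (1 / 2) * (CB - CA) := by
  intro WA WB EG C CA CB
  set m := #(univ.filter fun i => VA i < VB i)
  set D := ∑ i ∈ univ with VA i < VB i, |VA i - VB i| - ∑ i ∈ univ with VB i < VA i, |VA i - VB i|
  have hn : (n : ℝ) = 2 * m := by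
    have := card_filter_lt_add_card_filter_gt (s := univ) hnotie
    rw [card_univ, Fintype.card_fin] at this
    norm_cast; omega
  have hW : WB - WA = D := by
    simp only [WA, WB]
    rw [sum_ite_sub_const, sum_ite_sub_const, hSm, sub_sub_sub_cancel_right, ← sum_sub_distrib,
      sum_sub_eq_sum_abs_sub_sum_abs hnotie]
  have hC : CB - CA = D / (V / n) / m := by
    simp only [CA, CB, C]
    rw [← sum_div, ← sum_div, hSm, ← sub_div, ← sub_div]
  show (WB - WA) / V = 1 / 2 * (CB - CA)
  rw [hW, hC]
  rcases eq_or_ne (m : ℝ) 0 with hm | hm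
  · obtain rfl : n = 0 := by rw [hm, mul_zero] at hn; exact_mod_cast hn
    simp [D]
  · rw [hn]
    field_simp

/-- If both parties win the same number of seats, the efficiency gap is half
the difference of the average competitiveness of the districts each won. -/
theorem efficiency_gap_eq_half_competitiveness_gap
    (n : ℕ) (hn : 0 < n) (V : ℝ) (hV : 0 < V)
    (VA VB : Fin n → ℝ)
    (hnonnegA : ∀ i, 0 ≤ VA i) (hnonnegB : ∀ i, 0 ≤ VB i)
    (hturnout : ∀ i, VA i + VB i = V / n)
    (hnotie : ∀ i, VA i ≠ VB i)
    (hAwins : (Finset.univ.filter fun i => VB i < VA i).Nonempty)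
    (hBwins : (Finset.univ.filter fun i => VA i < VB i).Nonempty)
    (hSm : (Finset.univ.filter fun i => VB i < VA i).card
         = (Finset.univ.filter fun i => VA i < VB i).card) :
    let WA : ℝ := ∑ i, (if VB i < VA i then VA i - V / n / 2 else VA i)
    let WB : ℝ := ∑ i, (if VA i < VB i then VB i - V / n / 2 else VB i)
    let EG : ℝ := (WB - WA) / V
    let C : Fin n → ℝ := fun i => |VA i - VB i| / (V / n)
    let CA : ℝ := (∑ i ∈ Finset.univ.filter fun i => VB i < VA i, C i)
                  / ((Finset.univ.filter fun i => VB i < VA i).card : ℝ)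
    let CB : ℝ := (∑ i ∈ Finset.univ.filter fun i => VA i < VB i, C i)
                  / ((Finset.univ.filter fun i => VA i < VB i).card : ℝ)
    EG = (1 / 2) * (CB - CA) :=
  efficiency_gap_eq_half_competitiveness_gap_general n V VA VB hnotie hSm
end

section
/- The weighted waste-gap in district i satisfies (W_i^B(λ) - W_i^A(λ))/V_i = ((λ+1)/2)·C_i - 1/2 if B wins district i, and = 1/2 - ((λ+1)/2)·C_i if A wins district i. Consequently EG_λ = (S^B/n)·(((λ+1)/2)·C^B - 1/2) - (S^A/n)·(((λ+1)/2)·C^A - 1/2) when each party wins at least one district. -/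
/-!
With a + b = d, the waste gap of a district is affine in its margin |a - b| = C·d; summing
these affine expressions over the districts each party wins produces the seat count times
the same affine expression of the average competitiveness.
-/

open Finset

-- For empty `s` both sides vanish, because `0 / 0 = 0`.
lemma Finset.sum_mul_sub_eq_card_mul_average {ι : Type*} (s : Finset ι) (f : ι → ℝ) (α β : ℝ) :
    ∑ i ∈ s, (α * f i - β) = #s * (α * ((∑ i ∈ s, f i) / #s) - β) := by
  rcases s.eq_empty_or_nonempty with rfl | hs
  · simp
  · have hcard : (#s : ℝ) ≠ 0 := by exact_mod_cast hs.card_pos.ne'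
    rw [sum_sub_distrib, ← mul_sum, sum_const, nsmul_eq_mul]
    field_simp

lemma wasteGap_div_eq_of_lt (lam : ℝ) {a b d : ℝ} (hd : d ≠ 0) (hsum : a + b = d) (h : a < b) :
    (lam * (b - d / 2) - a) / d = (lam + 1) / 2 * (|a - b| / d) - 1 / 2 := by
  rw [abs_of_neg (sub_neg.mpr h)]
  field_simp
  linear_combination (lam - 1) * hsum

lemma wasteGap_div_eq_of_gt (lam : ℝ) {a b d : ℝ} (hd : d ≠ 0) (hsum : a + b = d) (h : b < a) :
    (b - lam * (a - d / 2)) / d = 1 / 2 - (lam + 1) / 2 * (|a - b| / d) := by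
  rw [abs_of_pos (sub_pos.mpr h)]
  field_simp
  linear_combination (1 - lam) * hsum

theorem weighted_efficiency_gap_differential_competitiveness_general
    (n : ℕ) (hn : 0 < n) (V : ℝ) (hV : 0 < V) (lam : ℝ)
    (VA VB : Fin n → ℝ)
    (hturnout : ∀ i, VA i + VB i = V / n)
    (hnotie : ∀ i, VA i ≠ VB i) :
    let WiA : Fin n → ℝ := fun i => if VB i < VA i then lam * (VA i - V / n / 2) else VA i
    let WiB : Fin n → ℝ := fun i => if VA i < VB i then lam * (VB i - V / n / 2) else VB i
    let EG : ℝ := ((∑ i, WiB i) - (∑ i, WiA i)) / V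
    let C : Fin n → ℝ := fun i => |VA i - VB i| / (V / n)
    let SA : ℝ := ((Finset.univ.filter fun i => VB i < VA i).card : ℝ)
    let SB : ℝ := ((Finset.univ.filter fun i => VA i < VB i).card : ℝ)
    let CA : ℝ := (∑ i ∈ Finset.univ.filter fun i => VB i < VA i, C i) / SA
    let CB : ℝ := (∑ i ∈ Finset.univ.filter fun i => VA i < VB i, C i) / SB
    (∀ i, VA i < VB i → (WiB i - WiA i) / (V / n) = (lam + 1) / 2 * C i - 1 / 2) ∧
    (∀ i, VB i < VA i → (WiB i - WiA i) / (V / n) = 1 / 2 - (lam + 1) / 2 * C i) ∧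
    EG = (SB / n) * ((lam + 1) / 2 * CB - 1 / 2)
       - (SA / n) * ((lam + 1) / 2 * CA - 1 / 2) := by
  intro WiA WiB EG C SA SB CA CB
  have hn' : (n : ℝ) ≠ 0 := by exact_mod_cast hn.ne'
  have hd : V / n ≠ 0 := div_ne_zero hV.ne' hn'
  have gapB : ∀ i, VA i < VB i → (WiB i - WiA i) / (V / n) = (lam + 1) / 2 * C i - 1 / 2 :=
    fun i h => by
      simpa [WiA, WiB, C, h, h.not_gt] using wasteGap_div_eq_of_lt lam hd (hturnout i) h
  have gapA : ∀ i, VB i < VA i → (WiB i - WiA i) / (V / n) = 1 / 2 - (lam + 1) / 2 * C i :=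
    fun i h => by
      simpa [WiA, WiB, C, h, h.not_gt] using wasteGap_div_eq_of_gt lam hd (hturnout i) h
  refine ⟨gapB, gapA, ?_⟩
  have hEG : EG = (∑ i, (WiB i - WiA i) / (V / n)) / n := by
    rw [← sum_div, sum_sub_distrib, div_div, div_mul_cancel₀ _ hn']
  have hAwon : (univ.filter fun i => ¬ VA i < VB i) = univ.filter fun i => VB i < VA i :=
    filter_congr fun i _ => by simp [lt_iff_le_and_ne, ne_comm, hnotie i]
  rw [hEG, ← sum_filter_add_sum_filter_not univ (fun i => VA i < VB i), hAwon,
    sum_congr rfl fun i hi => gapB i (mem_filter.mp hi).2,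
    sum_congr rfl fun i hi => gapA i (mem_filter.mp hi).2]
  simp only [← neg_sub ((lam + 1) / 2 * C _), sum_neg_distrib,
    sum_mul_sub_eq_card_mul_average]
  ring

/-- The weighted waste-gap in a district is a linear function of its
competitiveness, and consequently the weighted efficiency gap equals the
seat-share-weighted differential competitiveness (Cover). -/
theorem weighted_efficiency_gap_differential_competitiveness
    (n : ℕ) (hn : 0 < n) (V : ℝ) (hV : 0 < V) (lam : ℝ) (hlam : 0 < lam)
    (VA VB : Fin n → ℝ)
    (hnonnegA : ∀ i, 0 ≤ VA i) (hnonnegB : ∀ i, 0 ≤ VB i)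
    (hturnout : ∀ i, VA i + VB i = V / n)
    (hnotie : ∀ i, VA i ≠ VB i)
    (hAwins : (Finset.univ.filter fun i => VB i < VA i).Nonempty)
    (hBwins : (Finset.univ.filter fun i => VA i < VB i).Nonempty) :
    let WiA : Fin n → ℝ := fun i => if VB i < VA i then lam * (VA i - V / n / 2) else VA i
    let WiB : Fin n → ℝ := fun i => if VA i < VB i then lam * (VB i - V / n / 2) else VB i
    let EG : ℝ := ((∑ i, WiB i) - (∑ i, WiA i)) / V
    let C : Fin n → ℝ := fun i => |VA i - VB i| / (V / n)
    let SA : ℝ := ((Finset.univ.filter fun i => VB i < VA i).card : ℝ)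
    let SB : ℝ := ((Finset.univ.filter fun i => VA i < VB i).card : ℝ)
    let CA : ℝ := (∑ i ∈ Finset.univ.filter fun i => VB i < VA i, C i) / SA
    let CB : ℝ := (∑ i ∈ Finset.univ.filter fun i => VA i < VB i, C i) / SB
    (∀ i, VA i < VB i → (WiB i - WiA i) / (V / n) = (lam + 1) / 2 * C i - 1 / 2) ∧
    (∀ i, VB i < VA i → (WiB i - WiA i) / (V / n) = 1 / 2 - (lam + 1) / 2 * C i) ∧
    EG = (SB / n) * ((lam + 1) / 2 * CB - 1 / 2)
       - (SA / n) * ((lam + 1) / 2 * CA - 1 / 2) :=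
  weighted_efficiency_gap_differential_competitiveness_general n hn V hV lam VA VB hturnout hnotie
end

section
/- Under equal turnout, the relative efficiency gap satisfies REG_λ = (S_m - (λ + (1-λ)·C)·V_m) / (2·(1/2 + V_m)·(1/2 - V_m)), where C is the mean competitiveness over all districts. -/
/-!
Split the districts into those won by `A` and those won by `B`, and record the four totals
`a_A, b_A` (votes for `A`, `B` where `A` wins) and `a_B, b_B` (where `B` wins). Equal turnout
gives `a_A + b_A = S^A · V/n` and `a_B + b_B = (n - S^A) · V/n`, the absence of ties gives
`C · V = (a_A - b_A) + (b_B - a_B)`, and both wasted-vote totals are affine in these sums.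
The formula is then an identity of rational functions in the four totals.
-/

open Finset

section Districts

variable {ι : Type*}

theorem sum_ite_sub_half_eq [Fintype ι] (p : ι → Prop) [DecidablePred p] (lam t : ℝ) (f : ι → ℝ) :
    ∑ i, (if p i then lam * (f i - t / 2) else f i)
      = lam * (∑ i ∈ univ.filter p, f i - #(univ.filter p) * t / 2)
        + ∑ i ∈ univ.filter (fun i => ¬ p i), f i := by
  rw [sum_ite, ← mul_sum, sum_sub_distrib, sum_const, nsmul_eq_mul]
  ring

variable {VA VB : ι → ℝ}

theorem sum_add_sum_eq_card_mul {t : ℝ} (hturnout : ∀ i, VA i + VB i = t) (s : Finset ι) :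
    ∑ i ∈ s, VA i + ∑ i ∈ s, VB i = #s * t := by
  rw [← sum_add_distrib, sum_congr rfl fun i _ => hturnout i, sum_const, nsmul_eq_mul]

variable [Fintype ι]

theorem filter_lt_eq_filter_not_lt (hnotie : ∀ i, VA i ≠ VB i) :
    univ.filter (fun i => VA i < VB i) = univ.filter (fun i => ¬ VB i < VA i) :=
  filter_congr fun i _ => ⟨fun h => h.not_gt, fun h => (not_lt.1 h).lt_of_ne (hnotie i)⟩

theorem filter_not_lt_eq_filter_lt (hnotie : ∀ i, VA i ≠ VB i) :
    univ.filter (fun i => ¬ VA i < VB i) = univ.filter (fun i => VB i < VA i) :=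
  filter_congr fun i _ =>
    ⟨fun h => (not_lt.1 h).lt_of_ne (hnotie i).symm, fun h => h.not_gt⟩

theorem sum_abs_sub_eq_of_ne (hnotie : ∀ i, VA i ≠ VB i) :
    ∑ i, |VA i - VB i|
      = (∑ i ∈ univ.filter (fun i => VB i < VA i), VA i
          - ∑ i ∈ univ.filter (fun i => VB i < VA i), VB i)
        + (∑ i ∈ univ.filter (fun i => ¬ VB i < VA i), VB i
          - ∑ i ∈ univ.filter (fun i => ¬ VB i < VA i), VA i) := by
  rw [← sum_filter_add_sum_filter_not univ (fun i => VB i < VA i), ← sum_sub_distrib,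
    ← sum_sub_distrib]
  congr 1 <;> refine sum_congr rfl fun i hi => ?_ <;> rw [mem_filter] at hi
  · exact abs_of_pos (sub_pos.2 hi.2)
  · rw [abs_sub_comm]
    exact abs_of_pos (sub_pos.2 ((not_lt.1 hi.2).lt_of_ne (hnotie i)))

end Districts

theorem relative_efficiency_gap_of_totals (lam n V s aA bA aB bB : ℝ) (hn : n ≠ 0)
    (hAwon : aA + bA = s * (V / n)) (hBwon : aB + bB = (n - s) * (V / n))
    (hA : 0 < aA + aB) (hB : 0 < bA + bB) :
    (lam * (bB - (n - s) * (V / n) / 2) + bA) / (bA + bB)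
        - (lam * (aA - s * (V / n) / 2) + aB) / (aA + aB)
      = (s / n - 1 / 2 - (lam + (1 - lam) * ((aA - bA + (bB - aB)) / (V / n) / n))
            * ((aA + aB) / V - 1 / 2))
          / (2 * (1 / 2 + ((aA + aB) / V - 1 / 2)) * (1 / 2 - ((aA + aB) / V - 1 / 2))) := by
  have hV : V = aA + aB + (bA + bB) := by
    linear_combination -hAwon - hBwon - mul_div_cancel₀ V hn
  have hV0 : V ≠ 0 := by rw [hV]; positivity
  have hs : s = (aA + bA) * n / V := by field_simp at hAwon ⊢; linarith
  subst hs
  rw [show (1 : ℝ) / 2 + ((aA + aB) / V - 1 / 2) = (aA + aB) / V by ring,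
    show (1 : ℝ) / 2 - ((aA + aB) / V - 1 / 2) = (bA + bB) / V by rw [hV]; field_simp; ring]
  field_simp
  rw [hV]
  ring

theorem relative_efficiency_gap_formula_general
    (n : ℕ) (V : ℝ) (lam : ℝ)
    (VA VB : Fin n → ℝ)
    (hturnout : ∀ i, VA i + VB i = V / n)
    (hnotie : ∀ i, VA i ≠ VB i)
    (hApos : 0 < ∑ i, VA i) (hBpos : 0 < ∑ i, VB i) :
    let WA : ℝ := ∑ i, (if VB i < VA i then lam * (VA i - V / n / 2) else VA i)
    let WB : ℝ := ∑ i, (if VA i < VB i then lam * (VB i - V / n / 2) else VB i)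
    let REG : ℝ := WB / (∑ i, VB i) - WA / (∑ i, VA i)
    let Sm : ℝ := ((Finset.univ.filter fun i => VB i < VA i).card : ℝ) / n - 1 / 2
    let Vm : ℝ := (∑ i, VA i) / V - 1 / 2
    let C : ℝ := (∑ i, |VA i - VB i| / (V / n)) / n
    REG = (Sm - (lam + (1 - lam) * C) * Vm) / (2 * (1 / 2 + Vm) * (1 / 2 - Vm)) := by
  intro WA WB REG Sm Vm C
  have hn : (n : ℝ) ≠ 0 := Nat.cast_ne_zero.2 (by rintro rfl; simp at hApos)
  have hcard : (#(univ.filter fun i => ¬ VB i < VA i) : ℝ)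
      = n - #(univ.filter fun i => VB i < VA i) := by
    rw [eq_sub_iff_add_eq', ← Nat.cast_add, card_filter_add_card_filter_not, card_univ,
      Fintype.card_fin]
  have hWA : WA = _ := sum_ite_sub_half_eq _ lam (V / n) VA
  have hWB : WB = _ := sum_ite_sub_half_eq _ lam (V / n) VB
  rw [filter_lt_eq_filter_not_lt hnotie, filter_not_lt_eq_filter_lt hnotie, hcard] at hWB
  have hAwon := sum_add_sum_eq_card_mul hturnout (univ.filter fun i => VB i < VA i)
  have hBwon := sum_add_sum_eq_card_mul hturnout (univ.filter fun i => ¬ VB i < VA i)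
  rw [hcard] at hBwon
  simp only [REG, Sm, Vm, C, hWA, hWB]
  rw [← sum_filter_add_sum_filter_not univ (fun i => VB i < VA i)] at hApos hBpos
  rw [← sum_div, sum_abs_sub_eq_of_ne hnotie,
    ← sum_filter_add_sum_filter_not univ (fun i => VB i < VA i) VA,
    ← sum_filter_add_sum_filter_not univ (fun i => VB i < VA i) VB]
  exact relative_efficiency_gap_of_totals lam n V _ _ _ _ _ hn hAwon hBwon hApos hBpos

/-- Cover's global formula for the relative efficiency gap: under equal
turnout, `REG_λ = (S_m - (λ + (1-λ)·C)·V_m) / (2·(1/2 + V_m)·(1/2 - V_m))`,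
where `C` is the mean competitiveness over all districts. -/
theorem relative_efficiency_gap_formula
    (n : ℕ) (hn : 0 < n) (V : ℝ) (hV : 0 < V) (lam : ℝ) (hlam : 0 < lam)
    (VA VB : Fin n → ℝ)
    (hnonnegA : ∀ i, 0 ≤ VA i) (hnonnegB : ∀ i, 0 ≤ VB i)
    (hturnout : ∀ i, VA i + VB i = V / n)
    (hnotie : ∀ i, VA i ≠ VB i)
    (hApos : 0 < ∑ i, VA i) (hBpos : 0 < ∑ i, VB i) :
    let WA : ℝ := ∑ i, (if VB i < VA i then lam * (VA i - V / n / 2) else VA i)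
    let WB : ℝ := ∑ i, (if VA i < VB i then lam * (VB i - V / n / 2) else VB i)
    let REG : ℝ := WB / (∑ i, VB i) - WA / (∑ i, VA i)
    let Sm : ℝ := ((Finset.univ.filter fun i => VB i < VA i).card : ℝ) / n - 1 / 2
    let Vm : ℝ := (∑ i, VA i) / V - 1 / 2
    let C : ℝ := (∑ i, |VA i - VB i| / (V / n)) / n
    REG = (Sm - (lam + (1 - lam) * C) * Vm) / (2 * (1 / 2 + Vm) * (1 / 2 - Vm)) :=
  relative_efficiency_gap_formula_general n V lam VA VB hturnout hnotie hApos hBpos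
end

section
/- For fixed seat outcome, under equal turnout with no ties, the mean competitiveness C and the marginal vote share V_m satisfy 2·|V_m − S_m| ≤ 1 − C and C ≤ 1. -/
/-- Under equal turnout with no ties, the mean competitiveness `C` and the
marginal shares satisfy `2 * |V_m - S_m| ≤ 1 - C` and `C ≤ 1`. -/
theorem competitiveness_constraints
    (n : ℕ) (hn : 0 < n) (V : ℝ) (hV : 0 < V)
    (VA VB : Fin n → ℝ)
    (hnonnegA : ∀ i, 0 ≤ VA i) (hnonnegB : ∀ i, 0 ≤ VB i)
    (hturnout : ∀ i, VA i + VB i = V / n)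
    (hnotie : ∀ i, VA i ≠ VB i) :
    let Sm : ℝ := ((Finset.univ.filter fun i => VB i < VA i).card : ℝ) / n - 1 / 2
    let Vm : ℝ := (∑ i, VA i) / V - 1 / 2
    let C : ℝ := (∑ i, |VA i - VB i| / (V / n)) / n
    2 * |Vm - Sm| ≤ 1 - C ∧ C ≤ 1 := by
  intro Sm Vm C
  have hnR : (0:ℝ) < n := by exact_mod_cast hn
  have htpos : (0:ℝ) < V / n := div_pos hV hnR
  set t : ℝ := V / n with ht
  have hVnt : V = n * t := by rw [ht]; field_simp
  have key : ∀ i, |VA i / t - (if VB i < VA i then (1:ℝ) else 0)|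
      = 1/2 - |VA i - VB i| / t / 2 := by
    intro i
    have hturn := hturnout i
    rcases lt_or_gt_of_ne (hnotie i) with h | h
    · -- VA i < VB i
      rw [if_neg (not_lt.mpr h.le), abs_of_neg (by linarith : VA i - VB i < 0),
        sub_zero, abs_of_nonneg (div_nonneg (hnonnegA i) htpos.le)]
      field_simp
      rw [ht] at hturn
      linear_combination hturn
    · -- VB i < VA i
      rw [if_pos h, abs_of_pos (by linarith : 0 < VA i - VB i)]
      have h1 : VA i / t - 1 = -(VB i / t) := by field_simp; linarith
      rw [h1, abs_neg, abs_of_nonneg (div_nonneg (hnonnegB i) htpos.le)]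
      field_simp
      rw [ht] at hturn
      linear_combination hturn
  have hsumC : C = (∑ i, |VA i - VB i| / t) / n := rfl
  set S : ℝ := ∑ i, |VA i - VB i| / t with hS
  have hdiff : Vm - Sm
      = (∑ i, (VA i / t - if VB i < VA i then (1:ℝ) else 0)) / n := by
    have hcard : ((Finset.univ.filter fun i => VB i < VA i).card : ℝ)
        = ∑ i, (if VB i < VA i then (1:ℝ) else 0) := by
      rw [Finset.sum_boole]
    have hVA : (∑ i, VA i) / V = (∑ i, VA i / t) / n := by
      rw [hVnt, ← Finset.sum_div, div_div, mul_comm]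
    simp only [Vm, Sm, hVA, hcard, Finset.sum_sub_distrib, sub_div]
    ring
  constructor
  · have habs : |Vm - Sm| ≤ (∑ i, (1/2 - |VA i - VB i| / t / 2)) / n := by
      rw [hdiff, abs_div, abs_of_pos hnR]
      gcongr
      exact (Finset.abs_sum_le_sum_abs _ _).trans_eq
        (Finset.sum_congr rfl fun i _ => key i)
    have hsum : (∑ i, (1/2 - |VA i - VB i| / t / 2)) = (n:ℝ)/2 - S/2 := by
      rw [Finset.sum_sub_distrib, Finset.sum_const, Finset.card_univ,
        Fintype.card_fin, nsmul_eq_mul, mul_one_div, ← Finset.sum_div, hS]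
    rw [hsum] at habs
    have h2 : ((n:ℝ)/2 - S/2)/n = (1 - S/n)/2 := by
      field_simp
    rw [h2] at habs
    rw [hsumC]
    linarith
  · rw [hsumC]
    rw [div_le_one hnR]
    calc (∑ i, |VA i - VB i| / t) ≤ ∑ i : Fin n, (1:ℝ) := by
          apply Finset.sum_le_sum
          intro i _
          rw [div_le_one htpos]
          have := hturnout i
          rw [abs_le]
          constructor <;> [linarith [hnonnegA i]; linarith [hnonnegB i]]
      _ = n := by simp
end

section
/- Under equal turnout, EG_0 = S_m − V_m: if wasted votes count only losing votes (λ = 0), the efficiency gap vanishes exactly at proportionality. -/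
/-!
With λ = 0 a district contributes `V_B` to `W_B - W_A` when A wins it and `-V_A` when B wins it,
i.e. its turnout if A wins, minus `V_A` in either case. Under equal turnout `V / n` this sums to
`S^A · V / n - V^A`, and dividing by `V` gives `S_m - V_m`.
-/

open Finset

section WastedVotes

variable {α ι : Type*} [AddCommGroup α] [LinearOrder α]

theorem wastedVotes_sub_of_ne {a b : α} (h : a ≠ b) :
    (if a < b then 0 else b) - (if b < a then 0 else a) = (if b < a then a + b else 0) - a := by
  rcases h.lt_or_gt with hab | hba
  · simp [hab, hab.not_gt]
  · simp [hba, hba.not_gt]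

theorem sum_wastedVotes_sub [Fintype ι] (VA VB : ι → α) (hnotie : ∀ i, VA i ≠ VB i) :
    ∑ i, (if VA i < VB i then 0 else VB i) - ∑ i, (if VB i < VA i then 0 else VA i) =
      ∑ i ∈ univ.filter (fun i => VB i < VA i), (VA i + VB i) - ∑ i, VA i := by
  rw [← sum_sub_distrib, sum_filter, ← sum_sub_distrib]
  exact sum_congr rfl fun i _ => wastedVotes_sub_of_ne (hnotie i)

end WastedVotes

theorem efficiency_gap_zero_weight_formula_general
    (n : ℕ) (V : ℝ) (hV : 0 < V)
    (VA VB : Fin n → ℝ)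
    (hturnout : ∀ i, VA i + VB i = V / n)
    (hnotie : ∀ i, VA i ≠ VB i) :
    let WA : ℝ := ∑ i, (if VB i < VA i then 0 else VA i)
    let WB : ℝ := ∑ i, (if VA i < VB i then 0 else VB i)
    let Sm : ℝ := ((Finset.univ.filter fun i => VB i < VA i).card : ℝ) / n - 1 / 2
    let Vm : ℝ := (∑ i, VA i) / V - 1 / 2
    (WB - WA) / V = Sm - Vm := by
  intro WA WB Sm Vm
  have hgap : WB - WA = (univ.filter fun i => VB i < VA i).card * (V / n) - ∑ i, VA i := by
    rw [sum_wastedVotes_sub VA VB hnotie, sum_congr rfl fun i _ => hturnout i, sum_const,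
      nsmul_eq_mul]
  rw [hgap, sub_div, mul_div_assoc, div_div_cancel_left' hV.ne']
  ring

/-- Under equal turnout, if wasted votes count only losing votes (λ = 0),
then `EG_0 = S_m - V_m`: the efficiency gap vanishes exactly at
proportionality. -/
theorem efficiency_gap_zero_weight_formula
    (n : ℕ) (hn : 0 < n) (V : ℝ) (hV : 0 < V)
    (VA VB : Fin n → ℝ)
    (hnonnegA : ∀ i, 0 ≤ VA i) (hnonnegB : ∀ i, 0 ≤ VB i)
    (hturnout : ∀ i, VA i + VB i = V / n)
    (hnotie : ∀ i, VA i ≠ VB i) :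
    let WA : ℝ := ∑ i, (if VB i < VA i then 0 else VA i)
    let WB : ℝ := ∑ i, (if VA i < VB i then 0 else VB i)
    let Sm : ℝ := ((Finset.univ.filter fun i => VB i < VA i).card : ℝ) / n - 1 / 2
    let Vm : ℝ := (∑ i, VA i) / V - 1 / 2
    (WB - WA) / V = Sm - Vm :=
  efficiency_gap_zero_weight_formula_general n V hV VA VB hturnout hnotie
end
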